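/- arXiv:2209.09573 — 3 statements merged into one kernel-verified Lean document; each statement's English description precedes it below -/
import Mathlib

section
/- Let G̃ = (V, Ẽ) be a graph containing G as a subgraph (E ⊆ Ẽ), with maximal cliques Ṽ_1,…,Ṽ_{p̃}. Then for every integer t ≥ 1 one has ξ_t ≤ ξ̃^isp_t ≤ ξ^isp_t, where ξ̃^isp_t is the intermediate ideal-sparse bound built from the cliques of G̃. -/
open MvPolynomial

/-- Substituting `0` for the variables outside `U` (the restriction `f ↦ f|U`). -/
noncomputable def restrictVars {n : ℕ} (U : Finset (Fin n)) :
    MvPolynomial (Fin n) ℝ →ₐ[ℝ] MvPolynomial (Fin n) ℝ :=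
  aeval (fun i => if i ∈ U then (X i : MvPolynomial (Fin n) ℝ) else 0)

/-- Membership in the truncated quadratic module `M(g)_{2t}` generated by `g₀ = 1, g₁, …, gₘ`. -/
def inTruncModule {n m : ℕ} (g : Fin m → MvPolynomial (Fin n) ℝ) (t : ℕ)
    (q : MvPolynomial (Fin n) ℝ) : Prop :=
  ∃ σ : Fin (m + 1) → MvPolynomial (Fin n) ℝ,
    (∀ j, IsSumSq (σ j)) ∧
    (∀ j, (σ j * (Fin.cons 1 g : Fin (m + 1) → MvPolynomial (Fin n) ℝ) j).totalDegree ≤ 2 * t) ∧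
    q = ∑ j, σ j * (Fin.cons 1 g : Fin (m + 1) → MvPolynomial (Fin n) ℝ) j

/-- Membership in the truncated quadratic module `M(g|U)_{2t}`, with sums of squares of
polynomials in the variables `x(U)`. -/
def inTruncModuleRes {n m : ℕ} (U : Finset (Fin n))
    (g : Fin m → MvPolynomial (Fin n) ℝ) (t : ℕ) (q : MvPolynomial (Fin n) ℝ) : Prop :=
  ∃ σ : Fin (m + 1) → MvPolynomial (Fin n) ℝ,
    (∀ j, IsSumSq (σ j) ∧ restrictVars U (σ j) = σ j) ∧
    (∀ j, (σ j * restrictVars U ((Fin.cons 1 g : Fin (m + 1) → MvPolynomial (Fin n) ℝ) j)).totalDegree ≤ 2 * t) ∧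
    q = ∑ j, σ j * restrictVars U ((Fin.cons 1 g : Fin (m + 1) → MvPolynomial (Fin n) ℝ) j)

/-!
Both inequalities compare feasible sets. Given a feasible family `(L̃ₕ)` for `ξ̃^isp_t`, the
functional `L = ∑ₕ L̃ₕ(·|Ṽₕ)` is feasible for `ξ_t`: restriction maps `M(g)_{2t}` into
`M(g|Ṽₕ)_{2t}`, and maps `xᵢxⱼu` either to `0` or into the ideal kept inside `Ṽₕ`.
Given a feasible family `(Lₖ)` for `ξ^isp_t`, each clique `Vₖ` of `G` is a clique of `G̃`,
hence lies in some maximal clique `Ṽ_{φ k}`; then `L̃ₕ = ∑_{φ k = h} Lₖ(·|Vₖ)` is feasible for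
`ξ̃^isp_t`, the ideal constraints holding because `xᵢxⱼ|Vₖ = 0` for a nonedge `{i,j}` of `G`.
-/

theorem IsSumSq.map {R S F : Type*} [NonUnitalNonAssocSemiring R]
    [NonUnitalNonAssocSemiring S] [FunLike F R S] [NonUnitalRingHomClass F R S]
    (f : F) {s : R} (hs : IsSumSq s) : IsSumSq (f s) := by
  induction hs with
  | zero => simp
  | sq_add a _ ih => simpa using ih.sq_add (f a)

section restrictVars

variable {n : ℕ}

lemma restrictVars_X (U : Finset (Fin n)) (i : Fin n) :
    restrictVars U (X i) = if i ∈ U then X i else 0 :=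
  aeval_X _ _

lemma restrictVars_restrictVars {V W : Finset (Fin n)} (hVW : V ⊆ W)
    (p : MvPolynomial (Fin n) ℝ) :
    restrictVars V (restrictVars W p) = restrictVars V p := by
  suffices (restrictVars V).comp (restrictVars W) = restrictVars V from
    DFunLike.congr_fun this p
  refine algHom_ext fun i => ?_
  by_cases hi : i ∈ W
  · simp [restrictVars_X, hi]
  · have hiV : i ∉ V := fun hV => hi (hVW hV)
    simp [restrictVars_X, hi, hiV]

lemma restrictVars_monomial (U : Finset (Fin n)) (α : Fin n →₀ ℕ) (c : ℝ) :
    restrictVars U (monomial α c) = if α.support ⊆ U then monomial α c else 0 := by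
  rw [monomial_eq, Finsupp.prod, map_mul, map_prod, restrictVars, aeval_C,
    algebraMap_eq, ← restrictVars]
  split_ifs with hα
  · exact congrArg _ (Finset.prod_congr rfl fun i hi => by simp [restrictVars_X, hα hi])
  · obtain ⟨i, hi, hiU⟩ := Finset.not_subset.mp hα
    refine mul_eq_zero_of_right _ (Finset.prod_eq_zero hi ?_)
    simp [restrictVars_X, hiU, Finsupp.mem_support_iff.mp hi]

lemma coeff_restrictVars (U : Finset (Fin n)) (p : MvPolynomial (Fin n) ℝ)
    (α : Fin n →₀ ℕ) :
    coeff α (restrictVars U p) = if α.support ⊆ U then coeff α p else 0 := by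
  induction p using MvPolynomial.induction_on' with
  | monomial β c =>
    rw [restrictVars_monomial]
    by_cases hβ : β = α
    · subst hβ; split_ifs <;> simp
    · split_ifs <;> simp [coeff_monomial, hβ]
  | add p q hp hq => simp only [map_add, coeff_add, hp, hq]; split_ifs <;> simp

lemma support_subset_of_mem_support_restrictVars {U : Finset (Fin n)}
    {p : MvPolynomial (Fin n) ℝ} {α : Fin n →₀ ℕ} (hα : α ∈ (restrictVars U p).support) :
    α.support ⊆ U := by
  by_contra h
  simp [coeff_restrictVars, h] at hα

lemma support_restrictVars_subset (U : Finset (Fin n)) (p : MvPolynomial (Fin n) ℝ) :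
    (restrictVars U p).support ⊆ p.support := by
  intro α hα
  rw [mem_support_iff, coeff_restrictVars] at hα
  rw [mem_support_iff]
  aesop

lemma totalDegree_restrictVars_le (U : Finset (Fin n)) (p : MvPolynomial (Fin n) ℝ) :
    (restrictVars U p).totalDegree ≤ p.totalDegree :=
  Finset.sup_mono (support_restrictVars_subset U p)

lemma restrictVars_X_mul_X_mul_eq_zero {U : Finset (Fin n)} {i j : Fin n}
    (hij : ¬(i ∈ U ∧ j ∈ U)) (p : MvPolynomial (Fin n) ℝ) :
    restrictVars U (X i * X j * p) = 0 := by
  rw [not_and_or] at hij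
  rcases hij with hi | hj <;> simp [restrictVars_X, *]

end restrictVars

section truncModule

variable {n m : ℕ} {g : Fin m → MvPolynomial (Fin n) ℝ} {t : ℕ} {q : MvPolynomial (Fin n) ℝ}

lemma inTruncModule.restrictVars (U : Finset (Fin n)) (hq : inTruncModule g t q) :
    inTruncModuleRes U g t (restrictVars U q) := by
  obtain ⟨σ, hσ, hdeg, rfl⟩ := hq
  refine ⟨fun j => restrictVars U (σ j),
    fun j => ⟨(hσ j).map _, restrictVars_restrictVars subset_rfl _⟩, fun j => ?_, ?_⟩
  · rw [← map_mul]
    exact (totalDegree_restrictVars_le U _).trans (hdeg j)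
  · simp only [map_sum, map_mul]

lemma inTruncModuleRes.restrictVars {V W : Finset (Fin n)} (hVW : V ⊆ W)
    (hq : inTruncModuleRes W g t q) : inTruncModuleRes V g t (restrictVars V q) := by
  obtain ⟨σ, hσ, hdeg, rfl⟩ := hq
  refine ⟨fun j => restrictVars V (σ j),
    fun j => ⟨(hσ j).1.map _, restrictVars_restrictVars subset_rfl _⟩, fun j => ?_, ?_⟩
  · rw [← restrictVars_restrictVars hVW, ← map_mul]
    exact (totalDegree_restrictVars_le V _).trans (hdeg j)
  · simp only [map_sum, map_mul, restrictVars_restrictVars hVW]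

end truncModule

lemma SimpleGraph.exists_maximal_clique_superset {n q : ℕ} {G : SimpleGraph (Fin n)}
    {W : Fin q → Finset (Fin n)}
    (hW : ∀ S : Finset (Fin n),
      (G.IsClique (S : Set (Fin n)) ∧
        ∀ S' : Finset (Fin n), G.IsClique (S' : Set (Fin n)) → S ⊆ S' → S' = S) →
      ∃ h, W h = S)
    {S : Finset (Fin n)} (hS : G.IsClique (S : Set (Fin n))) : ∃ h, S ⊆ W h := by
  obtain ⟨T, hST, hT⟩ :=
    (Set.toFinite {T : Finset (Fin n) | G.IsClique (T : Set (Fin n))}).exists_le_maximal hS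
  obtain ⟨h, rfl⟩ := hW T ⟨hT.prop, fun S' hS' hTS' => (hT.le_of_ge hS' hTS').antisymm hTS'⟩
  exact ⟨h, hST⟩

lemma map_restrictVars_X_mul_X_mul_eq_zero {n D : ℕ} {U : Finset (Fin n)}
    {L : MvPolynomial (Fin n) ℝ →ₗ[ℝ] ℝ} {i j : Fin n}
    (hL : i ∈ U → j ∈ U → ∀ α : Fin n →₀ ℕ, (∑ k, α k) ≤ D → (∀ k, α k ≠ 0 → k ∈ U) →
      L (X i * X j * monomial α 1) = 0)
    {u : MvPolynomial (Fin n) ℝ} (hu : u.totalDegree ≤ D) :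
    L (restrictVars U (X i * X j * u)) = 0 := by
  by_cases hij : i ∈ U ∧ j ∈ U
  · rw [map_mul (restrictVars U), map_mul (restrictVars U), restrictVars_X, restrictVars_X,
      if_pos hij.1, if_pos hij.2, (restrictVars U u).as_sum, Finset.mul_sum, map_sum]
    refine Finset.sum_eq_zero fun α hα => ?_
    have hdeg : (∑ k, α k) ≤ D := by
      rw [← Finsupp.sum_fintype α (fun _ e => e) fun _ => rfl]
      exact (le_totalDegree hα).trans ((totalDegree_restrictVars_le U u).trans hu)
    have hsupp : ∀ k, α k ≠ 0 → k ∈ U := fun k hk =>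
      support_subset_of_mem_support_restrictVars hα (Finsupp.mem_support_iff.mpr hk)
    rw [← mul_one (coeff α _), ← smul_eq_mul (a := coeff α _), ← smul_monomial, mul_smul_comm,
      map_smul, hL hij.1 hij.2 α hdeg hsupp, smul_zero]
  · rw [restrictVars_X_mul_X_mul_eq_zero hij, map_zero]

section mergeFunctionals

variable {n : ℕ} {ι κ : Type*} [Fintype ι] [DecidableEq κ]

noncomputable def mergeFunctionals (φ : ι → κ) (V : ι → Finset (Fin n))
    (L : ι → MvPolynomial (Fin n) ℝ →ₗ[ℝ] ℝ) (h : κ) : MvPolynomial (Fin n) ℝ →ₗ[ℝ] ℝ :=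
  ∑ k with φ k = h, (L k).comp (restrictVars (V k)).toLinearMap

variable {φ : ι → κ} {V : ι → Finset (Fin n)} {W : κ → Finset (Fin n)}
  {L : ι → MvPolynomial (Fin n) ℝ →ₗ[ℝ] ℝ}

lemma mergeFunctionals_apply (h : κ) (q : MvPolynomial (Fin n) ℝ) :
    mergeFunctionals φ V L h q = ∑ k with φ k = h, L k (restrictVars (V k) q) := by
  simp [mergeFunctionals]

lemma sum_mergeFunctionals_apply_restrictVars [Fintype κ] (hφ : ∀ k, V k ⊆ W (φ k))
    (q : MvPolynomial (Fin n) ℝ) :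
    ∑ h, mergeFunctionals φ V L h (restrictVars (W h) q) = ∑ k, L k (restrictVars (V k) q) := by
  simp_rw [mergeFunctionals_apply]
  rw [← Finset.sum_fiberwise Finset.univ φ]
  refine Finset.sum_congr rfl fun h _ => Finset.sum_congr rfl fun k hk => ?_
  rw [restrictVars_restrictVars ((Finset.mem_filter.mp hk).2 ▸ hφ k)]

lemma mergeFunctionals_nonneg {m t : ℕ} {g : Fin m → MvPolynomial (Fin n) ℝ}
    (hφ : ∀ k, V k ⊆ W (φ k)) (hL : ∀ k q, inTruncModuleRes (V k) g t q → 0 ≤ L k q)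
    {h : κ} {q : MvPolynomial (Fin n) ℝ} (hq : inTruncModuleRes (W h) g t q) :
    0 ≤ mergeFunctionals φ V L h q := by
  rw [mergeFunctionals_apply]
  exact Finset.sum_nonneg fun k hk =>
    hL k _ (hq.restrictVars ((Finset.mem_filter.mp hk).2 ▸ hφ k))

lemma mergeFunctionals_X_mul_X_mul_eq_zero {G : SimpleGraph (Fin n)}
    (hV : ∀ k, G.IsClique (V k : Set (Fin n))) {i j : Fin n} (hij : i ≠ j) (hadj : ¬G.Adj i j)
    (h : κ) (p : MvPolynomial (Fin n) ℝ) : mergeFunctionals φ V L h (X i * X j * p) = 0 := by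
  rw [mergeFunctionals_apply]
  refine Finset.sum_eq_zero fun k _ => ?_
  rw [restrictVars_X_mul_X_mul_eq_zero (fun hk => hadj (hV k hk.1 hk.2 hij)), map_zero]

end mergeFunctionals

theorem dense_le_intermediate_le_ideal_sparse_general
    (n m N p pt t : ℕ) (G Gt : SimpleGraph (Fin n)) (hGGt : G ≤ Gt)
    (g : Fin m → MvPolynomial (Fin n) ℝ)
    (f0 : MvPolynomial (Fin n) ℝ) (f : Fin N → MvPolynomial (Fin n) ℝ) (a : Fin N → ℝ)
    (V : Fin p → Finset (Fin n))
    (hmax : ∀ k, G.IsClique (V k : Set (Fin n)) ∧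
      ∀ S : Finset (Fin n), G.IsClique (S : Set (Fin n)) → V k ⊆ S → S = V k)
    (Vt : Fin pt → Finset (Fin n))
    (hallt : ∀ S : Finset (Fin n),
      (Gt.IsClique (S : Set (Fin n)) ∧
        ∀ S' : Finset (Fin n), Gt.IsClique (S' : Set (Fin n)) → S ⊆ S' → S' = S) →
      ∃ h, Vt h = S)
    (xit xtisp xisp : EReal)
    (hxit : xit = sInf {v : EReal | ∃ L : MvPolynomial (Fin n) ℝ →ₗ[ℝ] ℝ,
      (∀ i, L (f i) = a i) ∧
      (∀ q, inTruncModule g t q → 0 ≤ L q) ∧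
      (∀ i j : Fin n, i ≠ j → ¬ G.Adj i j →
        ∀ u : MvPolynomial (Fin n) ℝ, u.totalDegree ≤ 2 * t - 2 → L (u * X i * X j) = 0) ∧
      v = ((L f0 : ℝ) : EReal)})
    (hxtisp : xtisp = sInf {v : EReal | ∃ L : Fin pt → (MvPolynomial (Fin n) ℝ →ₗ[ℝ] ℝ),
      (∀ i, ∑ h, L h (restrictVars (Vt h) (f i)) = a i) ∧
      (∀ h q, inTruncModuleRes (Vt h) g t q → 0 ≤ L h q) ∧
      (∀ h : Fin pt, ∀ α : Fin n →₀ ℕ, (∑ i, α i) ≤ 2 * t - 2 →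
        (∀ i, α i ≠ 0 → i ∈ Vt h) →
        ∀ i ∈ Vt h, ∀ j ∈ Vt h, i ≠ j → ¬ G.Adj i j →
          L h (X i * X j * monomial α 1) = 0) ∧
      v = ((∑ h, L h (restrictVars (Vt h) f0) : ℝ) : EReal)})
    (hxisp : xisp = sInf {v : EReal | ∃ L : Fin p → (MvPolynomial (Fin n) ℝ →ₗ[ℝ] ℝ),
      (∀ i, ∑ k, L k (restrictVars (V k) (f i)) = a i) ∧
      (∀ k q, inTruncModuleRes (V k) g t q → 0 ≤ L k q) ∧
      v = ((∑ k, L k (restrictVars (V k) f0) : ℝ) : EReal)}) :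
    xit ≤ xtisp ∧ xtisp ≤ xisp := by
  constructor
  · rw [hxit, hxtisp]
    refine sInf_le_sInf ?_
    rintro _ ⟨L, hLa, hLpos, hLideal, rfl⟩
    refine ⟨∑ h, (L h).comp (restrictVars (Vt h)).toLinearMap, fun i => by simpa using hLa i,
      fun q hq => ?_, fun i j hij hadj u hu => ?_, by simp⟩
    · simpa using Finset.sum_nonneg fun h _ => hLpos h _ (hq.restrictVars (Vt h))
    · simp only [LinearMap.sum_apply, LinearMap.comp_apply, AlgHom.toLinearMap_apply]
      refine Finset.sum_eq_zero fun h _ => ?_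
      rw [mul_assoc, mul_comm u]
      exact map_restrictVars_X_mul_X_mul_eq_zero
        (fun hi hj α hα hs => hLideal h α hα hs i hi j hj hij hadj) hu
  · rw [hxtisp, hxisp]
    refine sInf_le_sInf ?_
    rintro _ ⟨L, hLa, hLpos, rfl⟩
    choose φ hφ using fun k => Gt.exists_maximal_clique_superset hallt ((hmax k).1.mono hGGt)
    refine ⟨mergeFunctionals φ V L, fun i => ?_, fun h q => mergeFunctionals_nonneg hφ hLpos,
      fun h _ _ _ _ _ _ _ hij hadj =>
        mergeFunctionals_X_mul_X_mul_eq_zero (fun k => (hmax k).1) hij hadj h _, ?_⟩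
    · rw [sum_mergeFunctionals_apply_restrictVars hφ, hLa i]
    · rw [sum_mergeFunctionals_apply_restrictVars hφ]

/-- Let `G̃` contain `G` as a subgraph, with maximal cliques `Ṽ 1, …, Ṽ p̃`.
Then for every `t ≥ 1` one has `ξ_t ≤ ξ̃^isp_t ≤ ξ^isp_t`, where `ξ̃^isp_t` is the
intermediate ideal-sparse bound built from the cliques of `G̃` (it keeps the ideal
constraints `L̃ₕ(xᵢxⱼx^α) = 0` for nonedges `{i,j}` of `G` inside `Ṽ h`). -/
theorem dense_le_intermediate_le_ideal_sparse
    (n m N p pt t : ℕ) (ht : 1 ≤ t) (G Gt : SimpleGraph (Fin n)) (hGGt : G ≤ Gt)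
    (g : Fin m → MvPolynomial (Fin n) ℝ)
    (f0 : MvPolynomial (Fin n) ℝ) (f : Fin N → MvPolynomial (Fin n) ℝ) (a : Fin N → ℝ)
    (V : Fin p → Finset (Fin n))
    (hmax : ∀ k, G.IsClique (V k : Set (Fin n)) ∧
      ∀ S : Finset (Fin n), G.IsClique (S : Set (Fin n)) → V k ⊆ S → S = V k)
    (hall : ∀ S : Finset (Fin n),
      (G.IsClique (S : Set (Fin n)) ∧
        ∀ S' : Finset (Fin n), G.IsClique (S' : Set (Fin n)) → S ⊆ S' → S' = S) →
      ∃ k, V k = S)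
    (Vt : Fin pt → Finset (Fin n))
    (hmaxt : ∀ h, Gt.IsClique (Vt h : Set (Fin n)) ∧
      ∀ S : Finset (Fin n), Gt.IsClique (S : Set (Fin n)) → Vt h ⊆ S → S = Vt h)
    (hallt : ∀ S : Finset (Fin n),
      (Gt.IsClique (S : Set (Fin n)) ∧
        ∀ S' : Finset (Fin n), Gt.IsClique (S' : Set (Fin n)) → S ⊆ S' → S' = S) →
      ∃ h, Vt h = S)
    (xit xtisp xisp : EReal)
    (hxit : xit = sInf {v : EReal | ∃ L : MvPolynomial (Fin n) ℝ →ₗ[ℝ] ℝ,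
      (∀ i, L (f i) = a i) ∧
      (∀ q, inTruncModule g t q → 0 ≤ L q) ∧
      (∀ i j : Fin n, i ≠ j → ¬ G.Adj i j →
        ∀ u : MvPolynomial (Fin n) ℝ, u.totalDegree ≤ 2 * t - 2 → L (u * X i * X j) = 0) ∧
      v = ((L f0 : ℝ) : EReal)})
    (hxtisp : xtisp = sInf {v : EReal | ∃ L : Fin pt → (MvPolynomial (Fin n) ℝ →ₗ[ℝ] ℝ),
      (∀ i, ∑ h, L h (restrictVars (Vt h) (f i)) = a i) ∧
      (∀ h q, inTruncModuleRes (Vt h) g t q → 0 ≤ L h q) ∧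
      (∀ h : Fin pt, ∀ α : Fin n →₀ ℕ, (∑ i, α i) ≤ 2 * t - 2 →
        (∀ i, α i ≠ 0 → i ∈ Vt h) →
        ∀ i ∈ Vt h, ∀ j ∈ Vt h, i ≠ j → ¬ G.Adj i j →
          L h (X i * X j * monomial α 1) = 0) ∧
      v = ((∑ h, L h (restrictVars (Vt h) f0) : ℝ) : EReal)})
    (hxisp : xisp = sInf {v : EReal | ∃ L : Fin p → (MvPolynomial (Fin n) ℝ →ₗ[ℝ] ℝ),
      (∀ i, ∑ k, L k (restrictVars (V k) (f i)) = a i) ∧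
      (∀ k q, inTruncModuleRes (V k) g t q → 0 ≤ L k q) ∧
      v = ((∑ k, L k (restrictVars (V k) f0) : ℝ) : EReal)}) :
    xit ≤ xtisp ∧ xtisp ≤ xisp :=
  dense_le_intermediate_le_ideal_sparse_general n m N p pt t G Gt hGGt g f0 f a V hmax Vt hallt xit
    xtisp xisp hxit hxtisp hxisp
end

section
/- Let M ∈ ℝ^{m×n} be a nonnegative matrix. Then τ_+(M) equals the optimal value of the generalized moment problem inf{μ(ℝ^{m+n}) : μ a finite positive Borel measure on ℝ^{m+n}, ∫ x_i x_j dμ = M_{i,j−m} for all i ∈ U and j ∈ W, Supp(μ) ⊆ K^M}. -/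
/-!
The nonnegative rank-one matrices `a bᵀ ≤ M` are exactly the matrices `x_U x_Wᵀ` with
`x ∈ K^M`: rescaling `a` by `t` and `b` by `t⁻¹` brings both below `√M_max`. A finite measure
on `K^M` of mass `λ` whose moments are `M` is `λ` times a probability measure whose barycentre
`M / λ` lies in the convex hull of these atoms; conversely, a convex combination of atoms is the
barycentre of a finitely supported measure. The barycentre lies in the convex hull itself and not
only in its closure because `K^M` is compact and, by Carathéodory, the convex hull of a compact
set in finite dimension is compact.
-/

open Matrix MeasureTheory Set
open scoped ENNReal

section ConvexHull

variable {E : Type*} [NormedAddCommGroup E] [NormedSpace ℝ E] [FiniteDimensional ℝ E]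

-- Carathéodory: at most `finrank ℝ E + 1` points of `s` are needed.
theorem convexHull_eq_biUnion_image_stdSimplex (s : Set E) :
    convexHull ℝ s = ⋃ k ∈ Finset.range (Module.finrank ℝ E + 2),
      (fun p : (Fin k → ℝ) × (Fin k → E) => ∑ i, p.1 i • p.2 i) ''
        (stdSimplex ℝ (Fin k) ×ˢ univ.pi fun _ => s) := by
  apply Subset.antisymm
  · intro x hx
    obtain ⟨ι, _, z, w, hzs, hz, hw₀, hw₁, rfl⟩ := eq_pos_convex_span_of_mem_convexHull hx
    have hcard : Fintype.card ι < Module.finrank ℝ E + 2 := by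
      have := (vectorSpan ℝ (range z)).finrank_le
      have := hz.card_le_finrank_succ
      omega
    let e := (Fintype.equivFin ι).symm
    refine mem_biUnion (Finset.mem_range.2 hcard) ⟨(w ∘ e, z ∘ e), ⟨⟨fun i => (hw₀ _).le, ?_⟩,
      fun i _ => hzs (mem_range_self _)⟩, ?_⟩
    · simpa only [Function.comp_apply, e.sum_comp] using hw₁
    · exact e.sum_comp fun i => w i • z i
  · simp only [iUnion_subset_iff, image_subset_iff]
    rintro k - ⟨w, z⟩ ⟨hw, hz⟩
    exact (convex_convexHull ℝ s).sum_mem (fun i _ => hw.1 i) hw.2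
      fun i _ => subset_convexHull ℝ s (hz i (mem_univ i))

theorem IsCompact.convexHull {s : Set E} (hs : IsCompact s) : IsCompact (convexHull ℝ s) := by
  rw [convexHull_eq_biUnion_image_stdSimplex]
  refine Finset.isCompact_biUnion _ fun k _ => ?_
  refine ((isCompact_stdSimplex ℝ (Fin k)).prod (isCompact_univ_pi fun _ => hs)).image ?_
  fun_prop

end ConvexHull

section MomentProblem

variable {X E : Type*} [MeasurableSpace X] [NormedAddCommGroup E] [NormedSpace ℝ E]

theorem integral_mem_convexHull [FiniteDimensional ℝ E] {μ : Measure X} [IsProbabilityMeasure μ]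
    {s : Set E} {f : X → E} (hs : IsCompact s) (hf : Integrable f μ) (hfs : ∀ᵐ x ∂μ, f x ∈ s) :
    ∫ x, f x ∂μ ∈ convexHull ℝ s :=
  (convex_convexHull ℝ s).integral_mem hs.convexHull.isClosed
    (hfs.mono fun _ hx => subset_convexHull ℝ s hx) hf

theorem inv_smul_integral_mem_convexHull [FiniteDimensional ℝ E] [TopologicalSpace X]
    {μ : Measure X} [IsFiniteMeasure μ] (hμ : μ ≠ 0) {K : Set X} (hK : IsCompact K)
    (hμK : μ Kᶜ = 0) {g : X → E} (hg : Continuous g) (hgμ : Integrable g μ) :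
    (μ univ).toReal⁻¹ • ∫ x, g x ∂μ ∈ convexHull ℝ (g '' K) := by
  have : NeZero μ := ⟨hμ⟩
  have hgK : ∀ᵐ x ∂μ, g x ∈ g '' K :=
    Filter.mem_of_superset (mem_ae_iff.2 hμK) fun x hx => mem_image_of_mem g hx
  rw [← ENNReal.toReal_inv, ← integral_smul_measure]
  exact integral_mem_convexHull (hK.image hg) (hgμ.smul_measure (by simpa using hμ))
    (Measure.ae_smul_measure hgK _)

theorem exists_isProbabilityMeasure_integral_eq_of_mem_convexHull [CompleteSpace E]
    [MeasurableSingletonClass X] {K : Set X} {g : X → E} {y : E}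
    (hy : y ∈ convexHull ℝ (g '' K)) :
    ∃ μ : Measure X, IsProbabilityMeasure μ ∧ μ Kᶜ = 0 ∧ Integrable g μ ∧ ∫ x, g x ∂μ = y := by
  obtain ⟨ι, _, w, z, hw₀, hw₁, hz, rfl⟩ := mem_convexHull_iff_exists_fintype.1 hy
  choose p hpK hpz using hz
  have hg : Integrable g (∑ i, ENNReal.ofReal (w i) • Measure.dirac (p i)) :=
    integrable_finsetSum_measure.2 fun i _ =>
      (integrable_dirac enorm_lt_top).smul_measure ENNReal.ofReal_ne_top
  refine ⟨_, ⟨?_⟩, ?_, hg, ?_⟩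
  · simp [← ENNReal.ofReal_sum_of_nonneg fun i _ => hw₀ i, hw₁]
  · simp [Measure.dirac_apply, hpK]
  · rw [integral_finsetSum_measure (integrable_finsetSum_measure.1 hg)]
    simp [hw₀, hpz]

theorem exists_measure_univ_eq_of_inv_smul_mem_convexHull [CompleteSpace E]
    [MeasurableSingletonClass X] {K : Set X} {g : X → E} {y : E} {lam : ℝ} (hlam : 0 < lam)
    (hy : lam⁻¹ • y ∈ convexHull ℝ (g '' K)) :
    ∃ μ : Measure X, IsFiniteMeasure μ ∧ μ Kᶜ = 0 ∧ Integrable g μ ∧ ∫ x, g x ∂μ = y ∧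
      μ univ = ENNReal.ofReal lam := by
  obtain ⟨μ, _, hμK, hgμ, hμy⟩ := exists_isProbabilityMeasure_integral_eq_of_mem_convexHull hy
  refine ⟨ENNReal.ofReal lam • μ, μ.smul_finite ENNReal.ofReal_ne_top, by simp [hμK],
    hgμ.smul_measure ENNReal.ofReal_ne_top, ?_, by simp⟩
  rw [integral_smul_measure, hμy, ENNReal.toReal_ofReal hlam.le, smul_inv_smul₀ hlam.ne']

theorem sInf_inv_smul_mem_convexHull_eq_sInf_measure_univ [FiniteDimensional ℝ E]
    [TopologicalSpace X] [MeasurableSingletonClass X] {K : Set X} (hK : IsCompact K)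
    {g : X → E} (hg : Continuous g) {y : E} (hy : y = 0 → (0 : E) ∈ convexHull ℝ (g '' K)) :
    sInf {v : ℝ≥0∞ | ∃ lam : ℝ, 0 < lam ∧ lam⁻¹ • y ∈ convexHull ℝ (g '' K) ∧
        v = ENNReal.ofReal lam}
      = sInf {v : ℝ≥0∞ | ∃ μ : Measure X, IsFiniteMeasure μ ∧ μ Kᶜ = 0 ∧ Integrable g μ ∧
        ∫ x, g x ∂μ = y ∧ v = μ univ} := by
  apply le_antisymm
  · refine le_sInf ?_
    rintro _ ⟨μ, _, hμK, hgμ, rfl, rfl⟩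
    rcases eq_or_ne μ 0 with rfl | hμ
    · refine ENNReal.le_of_forall_pos_le_add fun ε hε _ => sInf_le_of_le ⟨ε, hε, ?_, rfl⟩ ?_
      · simpa using hy (by simp)
      · simp
    · exact sInf_le ⟨(μ univ).toReal,
        ENNReal.toReal_pos (by simpa using hμ) (measure_ne_top μ univ),
        inv_smul_integral_mem_convexHull hμ hK hμK hg hgμ,
        (ENNReal.ofReal_toReal (measure_ne_top μ univ)).symm⟩
  · refine le_sInf ?_
    rintro _ ⟨lam, hlam, hy, rfl⟩
    obtain ⟨μ, hμ, hμK, hgμ, hμy, hμlam⟩ :=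
      exists_measure_univ_eq_of_inv_smul_mem_convexHull hlam hy
    exact sInf_le ⟨μ, hμ, hμK, hgμ, hμy, hμlam.symm⟩

end MomentProblem

theorem mul_sub_sq_nonneg_iff {r t : ℝ} (hr : 0 ≤ r) : 0 ≤ r * t - t ^ 2 ↔ t ∈ Icc 0 r := by
  constructor
  · intro h
    constructor <;> nlinarith
  · rintro ⟨h₀, h₁⟩
    nlinarith

section RankOne

variable {ι κ : Type*}

theorem exists_vecMulVec_eq_mem_Icc_sqrt [Finite ι] [Finite κ] {a : ι → ℝ} {b : κ → ℝ}
    (ha : ∀ i, 0 ≤ a i) (hb : ∀ j, 0 ≤ b j) {c : ℝ} (hab : ∀ i j, a i * b j ≤ c) :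
    ∃ (a' : ι → ℝ) (b' : κ → ℝ), (∀ i, a' i ∈ Icc 0 √c) ∧ (∀ j, b' j ∈ Icc 0 √c) ∧
      vecMulVec a' b' = vecMulVec a b := by
  by_cases! h : ∀ i j, a i * b j = 0
  · refine ⟨0, 0, fun _ => ⟨le_rfl, Real.sqrt_nonneg c⟩, fun _ => ⟨le_rfl, Real.sqrt_nonneg c⟩, ?_⟩
    ext i j
    simp [vecMulVec_apply, h]
  obtain ⟨i₁, j₁, h₁⟩ := h
  have : Nonempty ι := ⟨i₁⟩
  have : Nonempty κ := ⟨j₁⟩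
  obtain ⟨i₀, hi₀⟩ := Finite.exists_max a
  obtain ⟨j₀, hj₀⟩ := Finite.exists_max b
  have hα : 0 < a i₀ := ((ha i₁).lt_of_ne (left_ne_zero_of_mul h₁).symm).trans_le (hi₀ i₁)
  have hβ : 0 < b j₀ := ((hb j₁).lt_of_ne (right_ne_zero_of_mul h₁).symm).trans_le (hj₀ j₁)
  -- `t` makes the largest entries of `t • a` and `t⁻¹ • b` both equal to `√(a i₀ * b j₀)`.
  set t := √(b j₀ / a i₀)
  have ht₀ : 0 < t := Real.sqrt_pos.2 (div_pos hβ hα)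
  have ht₂ : t ^ 2 = b j₀ / a i₀ := Real.sq_sqrt (div_pos hβ hα).le
  refine ⟨t • a, t⁻¹ • b, fun i => ⟨mul_nonneg ht₀.le (ha i), ?_⟩,
    fun j => ⟨mul_nonneg (inv_nonneg.2 ht₀.le) (hb j), ?_⟩, ?_⟩
  · refine Real.le_sqrt_of_sq_le ?_
    calc (t • a) i ^ 2 = b j₀ / a i₀ * a i ^ 2 := by simp [mul_pow, ht₂]
      _ ≤ b j₀ / a i₀ * a i₀ ^ 2 := by gcongr; exacts [ha i, hi₀ i]
      _ = a i₀ * b j₀ := by field_simp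
      _ ≤ c := hab i₀ j₀
  · refine Real.le_sqrt_of_sq_le ?_
    calc (t⁻¹ • b) j ^ 2 = a i₀ / b j₀ * b j ^ 2 := by simp [mul_pow, ht₂]
      _ ≤ a i₀ / b j₀ * b j₀ ^ 2 := by gcongr; exacts [hb j, hj₀ j]
      _ = a i₀ * b j₀ := by field_simp
      _ ≤ c := hab i₀ j₀
  · rw [smul_vecMulVec, vecMulVec_smul, smul_smul, mul_inv_cancel₀ ht₀.ne', one_smul]

/-- Valued in `ι → κ → ℝ` rather than in `Matrix ι κ ℝ`, which carries no norm, so that it can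
be integrated. -/
def sumOuter (x : ι ⊕ κ → ℝ) : ι → κ → ℝ := fun i j => x (.inl i) * x (.inr j)

/-- The set `K^M`, with `r = √M_max`. -/
def momentSupport (M : Matrix ι κ ℝ) (r : ℝ) : Set (ι ⊕ κ → ℝ) :=
  {x | (∀ v, 0 ≤ r * x v - (x v) ^ 2) ∧
    (∀ i j, M i j ≠ 0 → 0 ≤ M i j - x (.inl i) * x (.inr j)) ∧
    (∀ i j, M i j = 0 → x (.inl i) * x (.inr j) = 0)}

theorem continuous_sumOuter : Continuous (sumOuter : (ι ⊕ κ → ℝ) → ι → κ → ℝ) := by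
  unfold sumOuter
  fun_prop

theorem isClosed_momentSupport (M : Matrix ι κ ℝ) (r : ℝ) : IsClosed (momentSupport M r) := by
  simp only [momentSupport, ofPred_and, ofPred_forall]
  refine .inter (isClosed_iInter fun v => isClosed_le ?_ ?_) <| .inter
    (isClosed_iInter fun i => isClosed_iInter fun j => isClosed_iInter fun _ => isClosed_le ?_ ?_)
    (isClosed_iInter fun i => isClosed_iInter fun j => isClosed_iInter fun _ => isClosed_eq ?_ ?_)
  all_goals fun_prop

theorem momentSupport_subset_pi {M : Matrix ι κ ℝ} {r : ℝ} (hr : 0 ≤ r) :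
    momentSupport M r ⊆ univ.pi fun _ => Icc 0 r :=
  fun _ hx v _ => (mul_sub_sq_nonneg_iff hr).1 (hx.1 v)

theorem isCompact_momentSupport [Finite ι] [Finite κ] (M : Matrix ι κ ℝ) {r : ℝ} (hr : 0 ≤ r) :
    IsCompact (momentSupport M r) :=
  (isCompact_univ_pi fun _ => isCompact_Icc).of_isClosed_subset (isClosed_momentSupport M r)
    (momentSupport_subset_pi hr)

theorem image_sumOuter_momentSupport [Finite ι] [Finite κ] {M : Matrix ι κ ℝ} {c : ℝ}
    (hM : ∀ i j, M i j ≤ c) :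
    sumOuter '' momentSupport M √c = {B : Matrix ι κ ℝ |
      ∃ (a : ι → ℝ) (b : κ → ℝ), (∀ i, 0 ≤ a i) ∧ (∀ j, 0 ≤ b j) ∧
        (∀ i j, a i * b j ≤ M i j) ∧ B = vecMulVec a b} := by
  apply Subset.antisymm
  · rintro _ ⟨x, hx, rfl⟩
    have hx₀ := momentSupport_subset_pi (Real.sqrt_nonneg c) hx
    refine ⟨fun i => x (.inl i), fun j => x (.inr j), fun i => (hx₀ _ trivial).1,
      fun j => (hx₀ _ trivial).1, fun i j => ?_, rfl⟩
    by_cases hij : M i j = 0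
    · rw [hx.2.2 i j hij, hij]
    · linarith [hx.2.1 i j hij]
  · rintro _ ⟨a, b, ha, hb, hab, rfl⟩
    obtain ⟨a', b', ha', hb', heq⟩ :=
      exists_vecMulVec_eq_mem_Icc_sqrt ha hb fun i j => (hab i j).trans (hM i j)
    have hprod (i j) : a' i * b' j = a i * b j := congrFun (congrFun heq i) j
    refine ⟨Sum.elim a' b', ⟨fun v => ?_, fun i j _ => ?_, fun i j hij => ?_⟩, ?_⟩
    · rw [mul_sub_sq_nonneg_iff (Real.sqrt_nonneg c)]
      cases v with
      | inl i => exact ha' i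
      | inr j => exact hb' j
    · simpa [hprod] using hab i j
    · simpa [hprod] using le_antisymm (hij ▸ hab i j) (mul_nonneg (ha i) (hb j))
    · rw [← heq]
      rfl

theorem integrable_sumOuter_and_integral_eq_iff [Fintype ι] [Fintype κ]
    {μ : Measure (ι ⊕ κ → ℝ)} {M : ι → κ → ℝ} :
    (Integrable sumOuter μ ∧ ∫ x, sumOuter x ∂μ = M) ↔
      (∀ i j, Integrable (fun x => x (.inl i) * x (.inr j)) μ) ∧
        ∀ i j, ∫ x, x (.inl i) * x (.inr j) ∂μ = M i j := by
  simp only [integrable_pi_iff]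
  refine and_congr_right fun h => ?_
  simp only [funext_iff, eval_integral (fun i => integrable_pi_iff.2 (h i)), eval_integral (h _)]
  rfl

end RankOne

theorem tau_plus_eq_gmp_value_general
    (m n : ℕ) (M : Matrix (Fin m) (Fin n) ℝ)
    (Mmax : ℝ) (hMmax : IsGreatest {r : ℝ | ∃ i j, M i j = r} Mmax)
    (K : Set (Fin m ⊕ Fin n → ℝ))
    (hK : K = {x | (∀ v, 0 ≤ Real.sqrt Mmax * x v - (x v) ^ 2) ∧
        (∀ i j, M i j ≠ 0 → 0 ≤ M i j - x (Sum.inl i) * x (Sum.inr j)) ∧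
        (∀ i j, M i j = 0 → x (Sum.inl i) * x (Sum.inr j) = 0)}) :
    sInf {v : ℝ≥0∞ | ∃ lam : ℝ, 0 < lam ∧
        lam⁻¹ • M ∈ convexHull ℝ {B : Matrix (Fin m) (Fin n) ℝ |
          ∃ (a : Fin m → ℝ) (b : Fin n → ℝ), (∀ i, 0 ≤ a i) ∧ (∀ j, 0 ≤ b j) ∧
            (∀ i j, a i * b j ≤ M i j) ∧ B = vecMulVec a b} ∧
        v = ENNReal.ofReal lam}
    = sInf {v : ℝ≥0∞ | ∃ μ : Measure (Fin m ⊕ Fin n → ℝ), IsFiniteMeasure μ ∧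
        μ Kᶜ = 0 ∧
        (∀ i j, Integrable (fun x => x (Sum.inl i) * x (Sum.inr j)) μ) ∧
        (∀ i j, ∫ x, x (Sum.inl i) * x (Sum.inr j) ∂μ = M i j) ∧
        v = μ Set.univ} := by
  obtain rfl : K = momentSupport M √Mmax := hK
  rw [← image_sumOuter_momentSupport fun i j => hMmax.2 ⟨i, j, rfl⟩]
  refine (sInf_inv_smul_mem_convexHull_eq_sInf_measure_univ
    (isCompact_momentSupport M (Real.sqrt_nonneg Mmax)) continuous_sumOuter fun hM => ?_).trans ?_
  · exact subset_convexHull ℝ _ ⟨0, by simp [momentSupport, hM], by ext; simp [sumOuter]⟩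
  · congr 1
    ext v
    refine exists_congr fun μ => and_congr_right' <| and_congr_right' ?_
    rw [← and_assoc, ← and_assoc]
    exact and_congr_left' integrable_sumOuter_and_integral_eq_iff

/-- For a nonnegative matrix `M ∈ ℝ^{m×n}`, the parameter `τ₊(M)` equals
the optimal value of the generalized moment problem
`inf {μ(ℝ^{m+n}) : ∫ xᵢxⱼ dμ = M_{i,j−m} (i ∈ U, j ∈ W), Supp(μ) ⊆ K^M}` (both computed in
`ℝ≥0∞`).  The `m+n` variables are indexed by `Fin m ⊕ Fin n` (rows `U = inl`,
columns `W = inr`). -/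
theorem tau_plus_eq_gmp_value
    (m n : ℕ) (M : Matrix (Fin m) (Fin n) ℝ) (hnn : ∀ i j, 0 ≤ M i j)
    (Mmax : ℝ) (hMmax : IsGreatest {r : ℝ | ∃ i j, M i j = r} Mmax)
    (K : Set (Fin m ⊕ Fin n → ℝ))
    (hK : K = {x | (∀ v, 0 ≤ Real.sqrt Mmax * x v - (x v) ^ 2) ∧
        (∀ i j, M i j ≠ 0 → 0 ≤ M i j - x (Sum.inl i) * x (Sum.inr j)) ∧
        (∀ i j, M i j = 0 → x (Sum.inl i) * x (Sum.inr j) = 0)}) :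
    sInf {v : ℝ≥0∞ | ∃ lam : ℝ, 0 < lam ∧
        lam⁻¹ • M ∈ convexHull ℝ {B : Matrix (Fin m) (Fin n) ℝ |
          ∃ (a : Fin m → ℝ) (b : Fin n → ℝ), (∀ i, 0 ≤ a i) ∧ (∀ j, 0 ≤ b j) ∧
            (∀ i j, a i * b j ≤ M i j) ∧ B = vecMulVec a b} ∧
        v = ENNReal.ofReal lam}
    = sInf {v : ℝ≥0∞ | ∃ μ : Measure (Fin m ⊕ Fin n → ℝ), IsFiniteMeasure μ ∧
        μ Kᶜ = 0 ∧
        (∀ i j, Integrable (fun x => x (Sum.inl i) * x (Sum.inr j)) μ) ∧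
        (∀ i j, ∫ x, x (Sum.inl i) * x (Sum.inr j) ∂μ = M i j) ∧
        v = μ Set.univ} :=
  tau_plus_eq_gmp_value_general m n M Mmax hMmax K hK
end

section
/- For M = I_n the n×n identity matrix and any n ≥ 4, the level-1 dense bound for the nonnegative rank satisfies ξ^{+}_1(I_n) ≤ 8(n−2)/n < 8. -/
/-!
Witness: the functional `L` with `L 1 = 8(n-2)/n`, `L xᵢ = L xᵢ² = 2(n-2)/n`,
`L (xᵢ xⱼ) = (n-4)/n` for distinct `i, j` on the same side, and `L (xᵢ x_{n+j}) = δᵢⱼ`.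
Writing a test vector as `(t, u, v)` with `P = ∑ u`, `Q = ∑ v`, its moment matrix has the
quadratic form
`8(n-2)/n · (t + (P+Q)/4)² + (‖u+v‖² - (P+Q)²/n) + (n-4)/(2n) · (P-Q)²`,
whose middle term is nonnegative by Cauchy–Schwarz.
-/

open Matrix MvPolynomial

section SecondOrderFunctional

variable {σ : Type*} [Fintype σ]

noncomputable def secondOrderFunctional (c : ℝ) (m : σ → ℝ) (G : Matrix σ σ ℝ) :
    MvPolynomial σ ℝ →ₗ[ℝ] ℝ :=
  let ev₀ := (aeval (0 : σ → ℝ)).toLinearMap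
  c • ev₀ + ∑ α, m α • (ev₀ ∘ₗ (pderiv α).toLinearMap) +
    ∑ α, ∑ β, (G α β / 2) • (ev₀ ∘ₗ (pderiv α).toLinearMap ∘ₗ (pderiv β).toLinearMap)

variable (c : ℝ) (m : σ → ℝ) (G : Matrix σ σ ℝ)

theorem secondOrderFunctional_apply (p : MvPolynomial σ ℝ) :
    secondOrderFunctional c m G p = c * eval 0 p + ∑ α, m α * eval 0 (pderiv α p) +
      ∑ α, ∑ β, G α β / 2 * eval 0 (pderiv α (pderiv β p)) := by
  simp [secondOrderFunctional, LinearMap.sum_apply]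

theorem secondOrderFunctional_one : secondOrderFunctional c m G 1 = c := by
  simp [secondOrderFunctional_apply]

theorem secondOrderFunctional_X (γ : σ) : secondOrderFunctional c m G (X γ) = m γ := by
  classical
  simp [secondOrderFunctional_apply, Pi.single_apply, apply_ite (pderiv _)]

theorem secondOrderFunctional_X_mul_X (hG : G.IsSymm) (γ δ : σ) :
    secondOrderFunctional c m G (X γ * X δ) = G γ δ := by
  classical
  simp [secondOrderFunctional_apply, Pi.single_apply, apply_ite constantCoeff,
    apply_ite (pderiv _), mul_add, Finset.sum_add_distrib, hG.apply]

end SecondOrderFunctional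

section MomentMatrix

variable {σ : Type*} [Fintype σ]

noncomputable def momentMatrix (L : MvPolynomial σ ℝ →ₗ[ℝ] ℝ) : Matrix (Option σ) (Option σ) ℝ :=
  Matrix.of fun α β =>
    match α, β with
    | none, none => L 1
    | none, some i => L (X i)
    | some i, none => L (X i)
    | some i, some j => L (X i * X j)

theorem momentMatrix_posSemidef (L : MvPolynomial σ ℝ →ₗ[ℝ] ℝ)
    (h : ∀ (t : ℝ) (w : σ → ℝ), 0 ≤ L 1 * t ^ 2 + 2 * t * ((fun i => L (X i)) ⬝ᵥ w) +
      w ⬝ᵥ (of fun i j => L (X i * X j)) *ᵥ w) :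
    (momentMatrix L).PosSemidef := by
  refine .of_dotProduct_mulVec_nonneg ?_ fun x => ?_
  · ext (_ | i) (_ | j) <;> simp [momentMatrix, mul_comm]
  · refine (h (x none) (x ∘ some)).trans_eq ?_
    simp only [momentMatrix, dotProduct, mulVec, Fintype.sum_option, of_apply, star_trivial,
      Function.comp_apply, mul_add, Finset.mul_sum, Finset.sum_add_distrib]
    have hlin : ∑ i, 2 * x none * (L (X i) * x (some i)) =
        ∑ i, x (some i) * (L (X i) * x none) + ∑ i, x none * (L (X i) * x (some i)) := by
      rw [← Finset.sum_add_distrib]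
      exact Finset.sum_congr rfl fun _ _ => by ring
    rw [hlin]
    ring

end MomentMatrix

section PairedSecondMoments

variable {ι : Type*} [DecidableEq ι]

def pairedSecondMoments (d : ℝ) : Matrix (ι ⊕ ι) (ι ⊕ ι) ℝ :=
  let B : Matrix ι ι ℝ := 1 + d • of fun _ _ => 1
  fromBlocks B 1 1 B

theorem pairedSecondMoments_isSymm (d : ℝ) :
    (pairedSecondMoments d : Matrix (ι ⊕ ι) (ι ⊕ ι) ℝ).IsSymm := by
  ext (i | i) (j | j) <;> simp [pairedSecondMoments, one_apply, eq_comm]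

theorem pairedSecondMoments_apply_self (d : ℝ) (α : ι ⊕ ι) :
    pairedSecondMoments d α α = 1 + d := by
  cases α <;> simp [pairedSecondMoments]

theorem pairedSecondMoments_inl_inr (d : ℝ) (i j : ι) :
    pairedSecondMoments d (Sum.inl i) (Sum.inr j) = if i = j then 1 else 0 := by
  simp [pairedSecondMoments, one_apply]

theorem sumElim_dotProduct_pairedSecondMoments_mulVec [Fintype ι] (d : ℝ) (u v : ι → ℝ) :
    Sum.elim u v ⬝ᵥ pairedSecondMoments d *ᵥ Sum.elim u v =
      ∑ i, (u i + v i) ^ 2 + d * ((∑ i, u i) ^ 2 + (∑ i, v i) ^ 2) := by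
  have hJ : ∀ w : ι → ℝ, w ⬝ᵥ (d • of fun _ _ => (1 : ℝ)) *ᵥ w = d * (∑ i, w i) ^ 2 := by
    intro w
    simp only [smul_mulVec, dotProduct_smul]
    simp [dotProduct, mulVec, sq, Finset.sum_mul]
  simp only [pairedSecondMoments, fromBlocks_mulVec, sumElim_dotProduct_sumElim, add_mulVec,
    one_mulVec, dotProduct_add, Sum.elim_comp_inl, Sum.elim_comp_inr, hJ]
  have hsq : ∑ i, (u i + v i) ^ 2 = u ⬝ᵥ u + u ⬝ᵥ v + v ⬝ᵥ u + v ⬝ᵥ v := by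
    simp only [dotProduct, ← Finset.sum_add_distrib]
    exact Finset.sum_congr rfl fun _ _ => by ring
  rw [hsq]
  ring

end PairedSecondMoments

theorem identityWitness_quadraticForm_nonneg {N t P Q R : ℝ} (hN : 4 ≤ N)
    (hR : (P + Q) ^ 2 ≤ N * R) :
    0 ≤ 8 * (N - 2) / N * t ^ 2 + 2 * t * (2 * (N - 2) / N * (P + Q)) + R +
      (N - 4) / N * (P ^ 2 + Q ^ 2) := by
  have hN0 : N ≠ 0 := by positivity
  have hsos : 8 * (N - 2) / N * t ^ 2 + 2 * t * (2 * (N - 2) / N * (P + Q)) + R +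
      (N - 4) / N * (P ^ 2 + Q ^ 2) =
      8 * (N - 2) / N * (t + (P + Q) / 4) ^ 2 + (R - (P + Q) ^ 2 / N) +
        (N - 4) / (2 * N) * (P - Q) ^ 2 := by
    field_simp
    ring
  have hCS : 0 ≤ R - (P + Q) ^ 2 / N := by
    rw [sub_nonneg, div_le_iff₀ (by positivity)]
    linarith
  rw [hsos]
  have : 0 ≤ 8 * (N - 2) / N := by apply div_nonneg <;> linarith
  have : 0 ≤ (N - 4) / (2 * N) := by apply div_nonneg <;> linarith
  positivity

noncomputable def identityWitness (n : ℕ) : MvPolynomial (Fin n ⊕ Fin n) ℝ →ₗ[ℝ] ℝ :=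
  secondOrderFunctional (8 * ((n : ℝ) - 2) / n) (fun _ => 2 * ((n : ℝ) - 2) / n)
    (pairedSecondMoments (((n : ℝ) - 4) / n))

theorem identityWitness_one (n : ℕ) : identityWitness n 1 = 8 * ((n : ℝ) - 2) / n :=
  secondOrderFunctional_one ..

theorem identityWitness_X (n : ℕ) (α : Fin n ⊕ Fin n) :
    identityWitness n (X α) = 2 * ((n : ℝ) - 2) / n :=
  secondOrderFunctional_X ..

theorem identityWitness_X_mul_X (n : ℕ) (α β : Fin n ⊕ Fin n) :
    identityWitness n (X α * X β) = pairedSecondMoments (((n : ℝ) - 4) / n) α β :=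
  secondOrderFunctional_X_mul_X _ _ _ (pairedSecondMoments_isSymm _) α β

theorem identityWitness_X_sq {n : ℕ} (hn : n ≠ 0) (α : Fin n ⊕ Fin n) :
    identityWitness n (X α ^ 2) = 2 * ((n : ℝ) - 2) / n := by
  rw [sq, identityWitness_X_mul_X, pairedSecondMoments_apply_self]
  field_simp
  ring

theorem momentMatrix_identityWitness_posSemidef {n : ℕ} (hn : 4 ≤ n) :
    (momentMatrix (identityWitness n)).PosSemidef := by
  refine momentMatrix_posSemidef _ fun t w => ?_
  rw [← Sum.elim_comp_inl_inr w]
  set u := w ∘ Sum.inl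
  set v := w ∘ Sum.inr
  have hm : (fun α => identityWitness n (X α)) ⬝ᵥ Sum.elim u v =
      2 * ((n : ℝ) - 2) / n * (∑ i, u i + ∑ i, v i) := by
    simp [identityWitness_X, dotProduct, Fintype.sum_sum_type, mul_add, Finset.mul_sum]
  have hG : (of fun α β => identityWitness n (X α * X β)) =
      pairedSecondMoments (((n : ℝ) - 4) / n) := by
    ext α β
    exact identityWitness_X_mul_X n α β
  rw [identityWitness_one, hm, hG, sumElim_dotProduct_pairedSecondMoments_mulVec, ← add_assoc]
  refine identityWitness_quadraticForm_nonneg (by exact_mod_cast hn) ?_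
  simpa [← Finset.sum_add_distrib] using
    sq_sum_le_card_mul_sum_sq (s := Finset.univ) (f := fun i => u i + v i)

/-- For `M = Iₙ` and any `n ≥ 4`, the level-1 dense bound for the
nonnegative rank satisfies `ξ⁺₁(Iₙ) ≤ 8(n−2)/n < 8`.  Variables are indexed by
`Fin n ⊕ Fin n` (rows `U = inl`, columns `W = inr`). -/
theorem dense_nn_bound_small_on_identity
    (n : ℕ) (hn : 4 ≤ n) :
    sInf {v : EReal | ∃ L : MvPolynomial (Fin n ⊕ Fin n) ℝ →ₗ[ℝ] ℝ,
        1 ≤ L 1 ∧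
        (∀ i : Fin n ⊕ Fin n, L (X i ^ 2) ≤ L (X i)) ∧
        (∀ i j : Fin n, L (X (Sum.inl i) * X (Sum.inr j)) = if i = j then 1 else 0) ∧
        Matrix.PosSemidef (Matrix.of (fun α β =>
            match α, β with
            | none, none => L 1
            | none, some i => L (X i)
            | some i, none => L (X i)
            | some i, some j => L (X i * X j)) :
          Matrix (Option (Fin n ⊕ Fin n)) (Option (Fin n ⊕ Fin n)) ℝ) ∧
        v = ((L 1 : ℝ) : EReal)}
      ≤ ((8 * ((n : ℝ) - 2) / n : ℝ) : EReal) ∧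
    8 * ((n : ℝ) - 2) / n < 8 := by
  have hn' : (4 : ℝ) ≤ n := by exact_mod_cast hn
  refine ⟨sInf_le ⟨identityWitness n, ?_, fun α => ?_, fun i j => ?_,
    ?_, by rw [identityWitness_one]⟩, ?_⟩
  · rw [identityWitness_one, le_div_iff₀ (by positivity)]
    linarith
  · rw [identityWitness_X_sq (by omega), identityWitness_X]
  · rw [identityWitness_X_mul_X, pairedSecondMoments_inl_inr]
  -- the frozen `match` and the one in `momentMatrix` are different matchers, equal entrywise
  · convert momentMatrix_identityWitness_posSemidef hn using 1
    ext (_ | _) (_ | _) <;> rfl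
  · rw [div_lt_iff₀ (by positivity)]
    linarith
end
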